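/- arXiv:2509.12096 — 2 statements merged into one kernel-verified Lean document; each statement's English description precedes it below -/
import Mathlib

section
/- Let (I×Ω, V, Q) be a Fubini extension of (I, I', λ) and (Ω, F, Q'), and let {B^u : u ∈ I} be a jointly measurable family such that each (B^u_t) is a standard Brownian motion on (Ω, F, Q') and the family is essentially pairwise independent. Then for any times 0 ≤ t_0 < t_1 < ⋯ < t_n and any bounded measurable functions φ_1, …, φ_n : ℝ → ℝ, the expectation under Q of the product ∏_{k=1}^n φ_k(B^u_{t_k} − B^u_{t_{k−1}}) (viewed as a function of (u,ω)) equals the product of the expectations E_Q[φ_k(B^u_{t_k} − B^u_{t_{k−1}})]; i.e., the increments of the process B_t(u,ω) := B^u_t(ω) are independent under Q. -/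
/-!
On every section `{u} × Ω` the increments `ΔB_k = B_{t_k} - B_{t_{k-1}}` are independent under
`Q'` with laws `γ_k = N(0, t_k - t_{k-1})`, so the section integrals of `∏ φ_k(ΔB_k)` and of each
`φ_k(ΔB_k)` are the constants `∏ γ_k(φ_k)` and `γ_k(φ_k)`, whatever `u` is. The Fubini property
identifies each `Q`-integral with the `λ`-average of its section integrals.
-/

open MeasureTheory ProbabilityTheory

lemma integral_comp_eq_of_map_eq {Ω E : Type*} [MeasurableSpace Ω] [MeasurableSpace E]
    {μ : Measure Ω} {ν : Measure E} [NeZero ν] {X : Ω → E} (hX : μ.map X = ν)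
    {f : E → ℝ} (hf : AEStronglyMeasurable f ν) :
    ∫ ω, f (X ω) ∂μ = ∫ x, f x ∂ν := by
  have hXm : AEMeasurable X μ := .of_map_ne_zero (hX ▸ NeZero.ne ν)
  rw [← integral_map hXm (hX ▸ hf), hX]

lemma ProbabilityTheory.iIndepFun.integral_fun_prod_comp_of_map_eq {Ω ι : Type*} [Fintype ι]
    [MeasurableSpace Ω] {E : ι → Type*} [∀ i, MeasurableSpace (E i)] {μ : Measure Ω}
    {Y : ∀ i, Ω → E i} (hY : iIndepFun Y μ) {ν : ∀ i, Measure (E i)} [∀ i, NeZero (ν i)]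
    (hlaw : ∀ i, μ.map (Y i) = ν i) {f : ∀ i, E i → ℝ}
    (hf : ∀ i, AEStronglyMeasurable (f i) (ν i)) :
    ∫ ω, ∏ i, f i (Y i ω) ∂μ = ∏ i, ∫ x, f i x ∂ν i := by
  have hYm : ∀ i, AEMeasurable (Y i) μ := fun i => .of_map_ne_zero (hlaw i ▸ NeZero.ne (ν i))
  rw [hY.integral_fun_prod_comp hYm fun i => hlaw i ▸ hf i]
  exact Finset.prod_congr rfl fun i _ => integral_comp_eq_of_map_eq (hlaw i) (hf i)

lemma integral_eq_of_integral_section_eq {I Ω : Type*} [MeasurableSpace I]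
    [MeasurableSpace Ω] {V : MeasurableSpace (I × Ω)} {lam : Measure I} [IsProbabilityMeasure lam]
    {Q' : Measure Ω} {Q : @Measure (I × Ω) V} {g : I × Ω → ℝ}
    (hFub : ∫ p, g p ∂Q = ∫ u, (∫ ω, g (u, ω) ∂Q') ∂lam) {c : ℝ}
    (hsection : ∀ u, ∫ ω, g (u, ω) ∂Q' = c) :
    ∫ p, g p ∂Q = c := by
  simp [hFub, hsection]

theorem stmt1_general
    {I Ω : Type*} [MeasurableSpace I] [MeasurableSpace Ω]
    (lam : Measure I) (Q' : Measure Ω) [IsProbabilityMeasure lam] [IsProbabilityMeasure Q']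
    (V : MeasurableSpace (I × Ω))
    (Q : @Measure (I × Ω) V) (hQprob : @IsProbabilityMeasure _ V Q)
    (hFub : ∀ g : I × Ω → ℝ, @Integrable _ _ _ _ V g Q →
      (∫ p, g p ∂Q = ∫ u, (∫ ω, g (u, ω) ∂Q') ∂lam) ∧
      (∫ p, g p ∂Q = ∫ ω, (∫ u, g (u, ω) ∂lam) ∂Q'))
    (B : I → ℝ → Ω → ℝ)
    (hmeas : ∀ t : ℝ, @Measurable _ _ V _ (fun p : I × Ω => B p.1 t p.2))
    -- each B u is a standard Brownian motion on (Ω, Q')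
    (hBMgauss : ∀ u : I, ∀ s t : ℝ, 0 ≤ s → s < t →
      Measure.map (fun ω => B u t ω - B u s ω) Q' = gaussianReal 0 (Real.toNNReal (t - s)))
    (hBMindep : ∀ u : I, ∀ n : ℕ, ∀ t : Fin (n + 1) → ℝ, (∀ k, 0 ≤ t k) → StrictMono t →
      iIndepFun (m := fun _ => inferInstance)
        (fun k : Fin n => fun ω => B u (t k.succ) ω - B u (t k.castSucc) ω) Q')
    -- the times and the bounded measurable test functions
    (n : ℕ) (t : Fin (n + 1) → ℝ) (ht0 : ∀ k, 0 ≤ t k) (htmono : StrictMono t)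
    (φ : Fin n → ℝ → ℝ) (hφmeas : ∀ k, Measurable (φ k))
    (hφbdd : ∀ k, ∃ M, ∀ x, |φ k x| ≤ M) :
    ∫ p, (∏ k : Fin n, φ k (B p.1 (t k.succ) p.2 - B p.1 (t k.castSucc) p.2)) ∂Q
      = ∏ k : Fin n,
          ∫ p, φ k (B p.1 (t k.succ) p.2 - B p.1 (t k.castSucc) p.2) ∂Q := by
  choose M hM using hφbdd
  set γ : Fin n → Measure ℝ := fun k => gaussianReal 0 (t k.succ - t k.castSucc).toNNReal
  have hlaw : ∀ u k, Q'.map (fun ω => B u (t k.succ) ω - B u (t k.castSucc) ω) = γ k :=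
    fun u k => hBMgauss u _ _ (ht0 _) (htmono Fin.castSucc_lt_succ)
  have hφγ : ∀ k, AEStronglyMeasurable (φ k) (γ k) := fun k => (hφmeas k).aestronglyMeasurable
  have hφB : ∀ k, @Measurable _ _ V _
      (fun p : I × Ω => φ k (B p.1 (t k.succ) p.2 - B p.1 (t k.castSucc) p.2)) :=
    fun k => (hφmeas k).comp ((hmeas _).sub (hmeas _))
  have hint : ∀ k, Integrable
      (fun p : I × Ω => φ k (B p.1 (t k.succ) p.2 - B p.1 (t k.castSucc) p.2)) Q :=
    fun k => .of_bound (hφB k).aestronglyMeasurable (M k) (ae_of_all _ fun _ => hM k _)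
  have hint_prod : Integrable
      (fun p : I × Ω => ∏ k, φ k (B p.1 (t k.succ) p.2 - B p.1 (t k.castSucc) p.2)) Q := by
    refine .of_bound (Finset.measurable_prod _ fun k _ => hφB k).aestronglyMeasurable
      (∏ k, M k) (ae_of_all _ fun p => ?_)
    rw [Real.norm_eq_abs, Finset.abs_prod]
    exact Finset.prod_le_prod (fun _ _ => abs_nonneg _) fun k _ => hM k _
  rw [integral_eq_of_integral_section_eq (hFub _ hint_prod).1 fun u =>
    (hBMindep u n t ht0 htmono).integral_fun_prod_comp_of_map_eq (hlaw u) hφγ]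
  exact Finset.prod_congr rfl fun k _ => (integral_eq_of_integral_section_eq (hFub _ (hint k)).1
    fun u => integral_comp_eq_of_map_eq (hlaw u k) (hφγ k)).symm

/-- On a Fubini extension, for a jointly measurable e.p.i. family of standard
Brownian motions `{B u}` on `(Ω, Q')`, the process `𝐁_t(u,ω) = B u t ω` has independent
increments under `Q`: for times `0 ≤ t₀ < t₁ < ⋯ < t_n` and bounded measurable
`φ₁, …, φ_n`, the `Q`-expectation of `∏ φ_k(B^u_{t_k} - B^u_{t_{k-1}})` equals the
product of the `Q`-expectations. -/
theorem stmt1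
    {I Ω : Type*} [MeasurableSpace I] [MeasurableSpace Ω]
    (lam : Measure I) (Q' : Measure Ω) [IsProbabilityMeasure lam] [IsProbabilityMeasure Q']
    (V : MeasurableSpace (I × Ω)) (hV : Prod.instMeasurableSpace ≤ V)
    (Q : @Measure (I × Ω) V) (hQprob : @IsProbabilityMeasure _ V Q)
    (hExt : ∀ A : Set (I × Ω), MeasurableSet A → Q A = (lam.prod Q') A)
    (hFub : ∀ g : I × Ω → ℝ, @Integrable _ _ _ _ V g Q →
      (∫ p, g p ∂Q = ∫ u, (∫ ω, g (u, ω) ∂Q') ∂lam) ∧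
      (∫ p, g p ∂Q = ∫ ω, (∫ u, g (u, ω) ∂lam) ∂Q'))
    (B : I → ℝ → Ω → ℝ)
    (hmeas : ∀ t : ℝ, @Measurable _ _ V _ (fun p : I × Ω => B p.1 t p.2))
    -- each B u is a standard Brownian motion on (Ω, Q')
    (hBM0 : ∀ u, ∀ᵐ ω ∂Q', B u 0 ω = 0)
    (hBMgauss : ∀ u : I, ∀ s t : ℝ, 0 ≤ s → s < t →
      Measure.map (fun ω => B u t ω - B u s ω) Q' = gaussianReal 0 (Real.toNNReal (t - s)))
    (hBMindep : ∀ u : I, ∀ n : ℕ, ∀ t : Fin (n + 1) → ℝ, (∀ k, 0 ≤ t k) → StrictMono t →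
      iIndepFun (m := fun _ => inferInstance)
        (fun k : Fin n => fun ω => B u (t k.succ) ω - B u (t k.castSucc) ω) Q')
    (hBMcont : ∀ u, ∀ᵐ ω ∂Q', Continuous fun s => B u s ω)
    -- essential pairwise independence of the family (as processes)
    (hepi : ∀ᵐ u ∂lam, ∀ᵐ v ∂lam,
      IndepFun (fun ω => fun s : ℝ => B u s ω) (fun ω => fun s : ℝ => B v s ω) Q')
    -- the times and the bounded measurable test functions
    (n : ℕ) (t : Fin (n + 1) → ℝ) (ht0 : ∀ k, 0 ≤ t k) (htmono : StrictMono t)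
    (φ : Fin n → ℝ → ℝ) (hφmeas : ∀ k, Measurable (φ k))
    (hφbdd : ∀ k, ∃ M, ∀ x, |φ k x| ≤ M) :
    ∫ p, (∏ k : Fin n, φ k (B p.1 (t k.succ) p.2 - B p.1 (t k.castSucc) p.2)) ∂Q
      = ∏ k : Fin n,
          ∫ p, φ k (B p.1 (t k.succ) p.2 - B p.1 (t k.castSucc) p.2) ∂Q :=
  stmt1_general lam Q' V Q hQprob hFub B hmeas hBMgauss hBMindep n t ht0 htmono φ hφmeas hφbdd
end

section
/- Let (I×Ω, V, Q) be a Fubini extension and Θ : I×Ω → ℝ a Q-integrable, essentially pairwise independent random variable. Then for Q'-almost every ω ∈ Ω, ∫_I Θ(u,ω) λ(du) = ∫_{I×Ω} Θ dQ (exact law of large numbers). As a corollary, if {B^u : u ∈ I} is an essentially pairwise independent family of standard Brownian motions on (Ω,F,Q') that is jointly measurable, then for every t and Q'-a.e. ω, ∫_I B^u_t(ω) λ(du) = 0. -/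
/-!
For bounded `Θ`, write `f ω = ∫ Θ(u, ω) dλ` and `m = ∫ Θ dQ`. Fubini gives
`E[f²] = ∫ E[Θ_u f] dλ(u)`, and Fubini once more together with pairwise independence gives
`E[Θ_u f] = ∫ E[Θ_u] E[Θ_v] dλ(v) = E[Θ_u] m` for a.e. `u`. Hence `E[f²] = m² = (E f)²`: `f` has
variance zero, so `f = m` a.s. A general integrable `Θ` is approximated in `L¹(Q)` by its
truncations, and the `L¹(Q')` distance from `f` to `m` is at most twice the `L¹(Q)` distance
from `Θ` to a truncation.

The Fubini identity only speaks about Bochner integrals, which vanish on non-integrable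
functions; integrability of almost every section is recovered by applying it to `Θ + r` for
every constant `r`.
-/

open MeasureTheory ProbabilityTheory Filter Topology

section

variable {α β : Type*} [MeasurableSpace α] [MeasurableSpace β]

theorem ae_mem_and_integrable_of_integral_add_indicator {ν : Measure α} [IsProbabilityMeasure ν]
    {G : Set α} {a : α → ℝ} {s : ℝ}
    (h : ∀ r, ∫ x, (a x + G.indicator (fun _ => r) x) ∂ν = s + r) :
    (∀ᵐ x ∂ν, x ∈ G) ∧ Integrable a ν := by
  -- For `r > -s` the integral `s + r` is nonzero, hence not a junk value.
  have hint : ∀ r, -s < r → Integrable (fun x => a x + G.indicator (fun _ => r) x) ν := by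
    intro r hr
    by_contra hc
    have := h r
    rw [integral_undef hc] at this
    linarith
  obtain ⟨r, hr⟩ : ∃ r, -s < r := ⟨-s + 1, by linarith⟩
  have hr' : -s < r + 1 := by linarith
  have hdiff : (fun x => (a x + G.indicator (fun _ => r + 1) x) -
      (a x + G.indicator (fun _ => r) x)) = G.indicator 1 := by
    funext x
    by_cases hx : x ∈ G <;> simp [hx]
  have hind : Integrable (G.indicator (1 : α → ℝ)) ν := by
    rw [← hdiff]; exact (hint _ hr').sub (hint _ hr)
  have hind_one : G.indicator 1 =ᵐ[ν] fun _ => (1 : ℝ) := by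
    refine (integral_eq_iff_of_ae_le hind (integrable_const 1)
      (Eventually.of_forall fun x => Set.indicator_le_self' (fun _ _ => zero_le_one) x)).1 ?_
    rw [← hdiff, integral_sub (hint _ hr') (hint _ hr), h, h]
    simp
  have hG : ∀ᵐ x ∂ν, x ∈ G := hind_one.mono fun x hx => by
    by_contra hxG
    simp [hxG] at hx
  refine ⟨hG, ((hint r hr).sub (integrable_const r)).congr ?_⟩
  filter_upwards [hG] with x hx
  simp [hx]

theorem ae_integrable_and_integrable_integral_of_integral_integral_add_const
    {ν : Measure α} {ρ : Measure β} [IsProbabilityMeasure ν] [IsProbabilityMeasure ρ]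
    {Φ : α → β → ℝ} {s : ℝ} (h : ∀ r, ∫ a, ∫ b, (Φ a b + r) ∂ρ ∂ν = s + r) :
    (∀ᵐ a ∂ν, Integrable (Φ a) ρ) ∧ Integrable (fun a => ∫ b, Φ a b ∂ρ) ν := by
  refine ae_mem_and_integrable_of_integral_add_indicator (G := {a | Integrable (Φ a) ρ}) (s := s)
    fun r => ?_
  rw [← h r]
  refine integral_congr_ae (Eventually.of_forall fun a => ?_)
  by_cases ha : Integrable (Φ a) ρ
  · simp [ha, integral_add ha (integrable_const r)]
  · simp [ha, integral_undef, integrable_add_const_iff]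

end

theorem abs_sub_truncation_le {α : Type*} (f : α → ℝ) (A : ℝ) (x : α) :
    |f x - truncation f A x| ≤ |f x| := by
  by_cases hx : f x ∈ Set.Ioc (-A) A <;> simp [truncation, hx]

theorem tendsto_integral_abs_sub_truncation {α : Type*} [MeasurableSpace α] {μ : Measure α}
    {f : α → ℝ} (hf : Integrable f μ) :
    Tendsto (fun A => ∫ x, |f x - truncation f A x| ∂μ) atTop (𝓝 0) := by
  have := tendsto_integral_filter_of_dominated_convergence (fun x => |f x|)
    (F := fun A x => |f x - truncation f A x|) (f := fun _ => 0) (l := atTop)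
    (Eventually.of_forall fun A => (hf.1.sub hf.1.truncation).norm)
    (Eventually.of_forall fun A => Eventually.of_forall fun x => by
      simpa using abs_sub_truncation_le f A x)
    hf.abs
    (Eventually.of_forall fun x => tendsto_const_nhds.congr' <| by
      filter_upwards [Ioi_mem_atTop |f x|] with A hA
      simp [truncation_eq_self hA])
  simpa using this

section FubiniProperty

variable {I Ω : Type*} [MeasurableSpace I] [MeasurableSpace Ω] {mIΩ : MeasurableSpace (I × Ω)}

/-- `mIΩ` is the σ-algebra of the Fubini extension, possibly strictly larger than the product
σ-algebra. -/
def HasFubiniProperty (lam : Measure I) (Q' : Measure Ω) (Q : Measure (I × Ω)) : Prop :=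
  ∀ g : I × Ω → ℝ, Integrable g Q →
    (∫ p, g p ∂Q = ∫ u, (∫ ω, g (u, ω) ∂Q') ∂lam) ∧
    (∫ p, g p ∂Q = ∫ ω, (∫ u, g (u, ω) ∂lam) ∂Q')

namespace HasFubiniProperty

variable {lam : Measure I} {Q' : Measure Ω} {Q : Measure (I × Ω)}

theorem prod_right_ae_and_integral_prod_left [IsProbabilityMeasure lam]
    [IsProbabilityMeasure Q'] [IsProbabilityMeasure Q] (hQ : HasFubiniProperty lam Q' Q)
    {Ψ : I × Ω → ℝ} (hΨ : Integrable Ψ Q) :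
    (∀ᵐ u ∂lam, Integrable (fun ω => Ψ (u, ω)) Q') ∧
      Integrable (fun u => ∫ ω, Ψ (u, ω) ∂Q') lam :=
  ae_integrable_and_integrable_integral_of_integral_integral_add_const (s := ∫ p, Ψ p ∂Q)
    fun r => by
      rw [← (hQ (fun p => Ψ p + r) (hΨ.add (integrable_const r))).1,
        integral_add hΨ (integrable_const r)]
      simp

theorem prod_left_ae_and_integral_prod_right [IsProbabilityMeasure lam]
    [IsProbabilityMeasure Q'] [IsProbabilityMeasure Q] (hQ : HasFubiniProperty lam Q' Q)
    {Ψ : I × Ω → ℝ} (hΨ : Integrable Ψ Q) :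
    (∀ᵐ ω ∂Q', Integrable (fun u => Ψ (u, ω)) lam) ∧
      Integrable (fun ω => ∫ u, Ψ (u, ω) ∂lam) Q' :=
  ae_integrable_and_integrable_integral_of_integral_integral_add_const (s := ∫ p, Ψ p ∂Q)
    fun r => by
      rw [← (hQ (fun p => Ψ p + r) (hΨ.add (integrable_const r))).2,
        integral_add hΨ (integrable_const r)]
      simp

theorem map_snd [IsProbabilityMeasure lam] [IsFiniteMeasure Q'] [IsFiniteMeasure Q]
    (hQ : HasFubiniProperty lam Q' Q) (hsnd : Measurable[mIΩ] Prod.snd) : Q.map Prod.snd = Q' := by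
  ext E hE
  rw [Measure.map_apply hsnd hE, ← measureReal_eq_measureReal_iff,
    ← integral_indicator_one (hsnd hE), ← integral_indicator_one hE,
    (hQ ((Prod.snd ⁻¹' E).indicator 1) ((integrable_const 1).indicator (hsnd hE))).2]
  refine integral_congr_ae (Eventually.of_forall fun ω => ?_)
  by_cases hω : ω ∈ E <;> simp [hω]

theorem integral_mul_integral_eq_integral_integral_mul [IsProbabilityMeasure lam]
    [IsFiniteMeasure Q'] [IsFiniteMeasure Q] (hQ : HasFubiniProperty lam Q' Q)
    (hsnd : Measurable[mIΩ] Prod.snd)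
    {Θ : I × Ω → ℝ} (hΘ : Integrable Θ Q) {T : Ω → ℝ} (hT : AEStronglyMeasurable T Q') {C : ℝ}
    (hTC : ∀ᵐ ω ∂Q', ‖T ω‖ ≤ C) :
    ∫ ω, T ω * ∫ u, Θ (u, ω) ∂lam ∂Q' = ∫ u, ∫ ω, T ω * Θ (u, ω) ∂Q' ∂lam := by
  rw [← hQ.map_snd hsnd] at hT hTC
  have hTΘ : Integrable (fun p => T p.2 * Θ p) Q :=
    hΘ.bdd_mul (hT.comp_measurable hsnd) (ae_of_ae_map hsnd.aemeasurable hTC)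
  rw [← (hQ _ hTΘ).1, (hQ _ hTΘ).2]
  simp only [integral_const_mul]

theorem integral_abs_integral_le [IsProbabilityMeasure lam] [IsProbabilityMeasure Q']
    [IsProbabilityMeasure Q] (hQ : HasFubiniProperty lam Q' Q) {Ψ : I × Ω → ℝ}
    (hΨ : Integrable Ψ Q) :
    ∫ ω, |∫ u, Ψ (u, ω) ∂lam| ∂Q' ≤ ∫ p, |Ψ p| ∂Q := by
  rw [(hQ _ hΨ.abs).2]
  exact integral_mono (hQ.prod_left_ae_and_integral_prod_right hΨ).2.abs
    (hQ.prod_left_ae_and_integral_prod_right hΨ.abs).2 fun ω => abs_integral_le_integral_abs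

theorem integral_abs_integral_sub_le [IsProbabilityMeasure lam] [IsProbabilityMeasure Q']
    [IsProbabilityMeasure Q] (hQ : HasFubiniProperty lam Q' Q) {Ψ : I × Ω → ℝ}
    (hΨ : Integrable Ψ Q) :
    ∫ ω, |∫ u, Ψ (u, ω) ∂lam - ∫ p, Ψ p ∂Q| ∂Q' ≤ 2 * ∫ p, |Ψ p| ∂Q := by
  have hf := (hQ.prod_left_ae_and_integral_prod_right hΨ).2
  calc ∫ ω, |∫ u, Ψ (u, ω) ∂lam - ∫ p, Ψ p ∂Q| ∂Q'
      ≤ ∫ ω, (|∫ u, Ψ (u, ω) ∂lam| + |∫ p, Ψ p ∂Q|) ∂Q' :=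
        integral_mono (hf.sub (integrable_const _)).abs (hf.abs.add (integrable_const _))
          fun ω => abs_sub _ _
    _ = ∫ ω, |∫ u, Ψ (u, ω) ∂lam| ∂Q' + |∫ p, Ψ p ∂Q| := by
        rw [integral_add hf.abs (integrable_const _)]
        simp
    _ ≤ ∫ p, |Ψ p| ∂Q + ∫ p, |Ψ p| ∂Q :=
        add_le_add (hQ.integral_abs_integral_le hΨ) abs_integral_le_integral_abs
    _ = 2 * ∫ p, |Ψ p| ∂Q := (two_mul _).symm

theorem integral_abs_integral_sub_le_of_ae_eq [IsProbabilityMeasure lam]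
    [IsProbabilityMeasure Q'] [IsProbabilityMeasure Q] (hQ : HasFubiniProperty lam Q' Q)
    {Θ Ψ : I × Ω → ℝ} (hΘ : Integrable Θ Q) (hΨ : Integrable Ψ Q)
    (hΨ_eq : ∀ᵐ ω ∂Q', ∫ u, Ψ (u, ω) ∂lam = ∫ p, Ψ p ∂Q) :
    ∫ ω, |∫ u, Θ (u, ω) ∂lam - ∫ p, Θ p ∂Q| ∂Q' ≤ 2 * ∫ p, |Θ p - Ψ p| ∂Q := by
  refine le_of_eq_of_le (integral_congr_ae ?_) (hQ.integral_abs_integral_sub_le (hΘ.sub hΨ))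
  filter_upwards [(hQ.prod_left_ae_and_integral_prod_right hΘ).1,
    (hQ.prod_left_ae_and_integral_prod_right hΨ).1, hΨ_eq] with ω hΘω hΨω hω
  simp only [integral_sub hΘω hΨω, integral_sub hΘ hΨ, hω]
  congr 1
  ring

theorem exact_law_ae_of_bounded [IsProbabilityMeasure lam] [IsProbabilityMeasure Q']
    [IsProbabilityMeasure Q] (hQ : HasFubiniProperty lam Q' Q) (hsnd : Measurable[mIΩ] Prod.snd)
    {Θ : I × Ω → ℝ} (hΘ : Integrable Θ Q) {C : ℝ} (hΘC : ∀ p, ‖Θ p‖ ≤ C)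
    (hΘ_indep : ∀ᵐ u ∂lam, ∀ᵐ v ∂lam, IndepFun (fun ω => Θ (u, ω)) (fun ω => Θ (v, ω)) Q') :
    ∀ᵐ ω ∂Q', ∫ u, Θ (u, ω) ∂lam = ∫ p, Θ p ∂Q := by
  set f : Ω → ℝ := fun ω => ∫ u, Θ (u, ω) ∂lam
  set c : I → ℝ := fun u => ∫ ω, Θ (u, ω) ∂Q'
  set m := ∫ p, Θ p ∂Q
  have hc_int : ∫ u, c u ∂lam = m := ((hQ Θ hΘ).1).symm
  have hf_int : ∫ ω, f ω ∂Q' = m := ((hQ Θ hΘ).2).symm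
  have hsec := (hQ.prod_right_ae_and_integral_prod_left hΘ).1
  have hf := (hQ.prod_left_ae_and_integral_prod_right hΘ).2
  have hfC : ∀ ω, ‖f ω‖ ≤ C := fun ω => by
    simpa using norm_integral_le_of_norm_le_const (μ := lam)
      (Eventually.of_forall fun u => hΘC (u, ω))
  have hcov : ∀ᵐ u ∂lam, ∫ ω, Θ (u, ω) * f ω ∂Q' = c u * m := by
    filter_upwards [hsec, hΘ_indep] with u hu hu_indep
    calc ∫ ω, Θ (u, ω) * f ω ∂Q'
        = ∫ v, ∫ ω, Θ (u, ω) * Θ (v, ω) ∂Q' ∂lam :=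
          hQ.integral_mul_integral_eq_integral_integral_mul hsnd hΘ hu.1
            (Eventually.of_forall fun ω => hΘC (u, ω))
      _ = ∫ v, c u * c v ∂lam := by
          refine integral_congr_ae ?_
          filter_upwards [hsec, hu_indep] with v hv huv
          exact huv.integral_fun_mul_eq_mul_integral hu.1 hv.1
      _ = c u * m := by rw [integral_const_mul, hc_int]
  have hsq : ∫ ω, f ω ^ 2 ∂Q' = m ^ 2 :=
    calc ∫ ω, f ω ^ 2 ∂Q'
        = ∫ u, ∫ ω, f ω * Θ (u, ω) ∂Q' ∂lam := by
          simp only [sq]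
          exact hQ.integral_mul_integral_eq_integral_integral_mul hsnd hΘ hf.1
            (Eventually.of_forall hfC)
      _ = ∫ u, c u * m ∂lam := by
          refine integral_congr_ae ?_
          filter_upwards [hcov] with u hu
          simp only [mul_comm (f _), hu]
      _ = m ^ 2 := by rw [integral_mul_const, hc_int, sq]
  have hf_memLp : MemLp f 2 Q' := MemLp.of_bound hf.1 C (Eventually.of_forall hfC)
  have hvar : Var[f; Q'] = 0 := by
    rw [variance_eq_sub hf_memLp, hf_int]
    simp [hsq]
  simpa [hf_int] using ae_eq_integral_of_variance_eq_zero hf_memLp hvar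

theorem exact_law_ae [IsProbabilityMeasure lam] [IsProbabilityMeasure Q']
    [IsProbabilityMeasure Q] (hQ : HasFubiniProperty lam Q' Q) (hsnd : Measurable[mIΩ] Prod.snd)
    {Θ : I × Ω → ℝ} (hΘ : Integrable Θ Q)
    (hΘ_indep : ∀ᵐ u ∂lam, ∀ᵐ v ∂lam, IndepFun (fun ω => Θ (u, ω)) (fun ω => Θ (v, ω)) Q') :
    ∀ᵐ ω ∂Q', ∫ u, Θ (u, ω) ∂lam = ∫ p, Θ p ∂Q := by
  have htrunc : ∀ A : ℝ,
      ∀ᵐ ω ∂Q', ∫ u, truncation Θ A (u, ω) ∂lam = ∫ p, truncation Θ A p ∂Q :=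
    fun A => hQ.exact_law_ae_of_bounded hsnd hΘ.1.integrable_truncation
      (fun p => abs_truncation_le_bound Θ A p) <| by
        filter_upwards [hΘ_indep] with u hu
        filter_upwards [hu] with v huv
        exact huv.comp (measurable_id.indicator measurableSet_Ioc)
          (measurable_id.indicator measurableSet_Ioc)
  have hdev : ∫ ω, |∫ u, Θ (u, ω) ∂lam - ∫ p, Θ p ∂Q| ∂Q' = 0 := by
    have hlim : Tendsto (fun A => 2 * ∫ p, |Θ p - truncation Θ A p| ∂Q) atTop (𝓝 0) := by
      simpa using (tendsto_integral_abs_sub_truncation hΘ).const_mul 2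
    refine le_antisymm (ge_of_tendsto' hlim fun A => ?_) (integral_nonneg fun ω => abs_nonneg _)
    exact hQ.integral_abs_integral_sub_le_of_ae_eq hΘ hΘ.1.integrable_truncation (htrunc A)
  have hf := (hQ.prod_left_ae_and_integral_prod_right hΘ).2
  filter_upwards [(integral_eq_zero_iff_of_nonneg (fun ω => abs_nonneg _)
    (hf.sub (integrable_const _)).abs).1 hdev] with ω hω
  simpa [sub_eq_zero] using hω

end HasFubiniProperty

end FubiniProperty

theorem stmt14_general
    {I Ω : Type*} [MeasurableSpace I] [MeasurableSpace Ω]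
    (lam : Measure I) (Q' : Measure Ω) [IsProbabilityMeasure lam] [IsProbabilityMeasure Q']
    (V : MeasurableSpace (I × Ω)) (hV : Prod.instMeasurableSpace ≤ V)
    (Q : @Measure (I × Ω) V) (hQprob : @IsProbabilityMeasure _ V Q)
    (hFub : ∀ g : I × Ω → ℝ, @Integrable _ _ _ _ V g Q →
      (∫ p, g p ∂Q = ∫ u, (∫ ω, g (u, ω) ∂Q') ∂lam) ∧
      (∫ p, g p ∂Q = ∫ ω, (∫ u, g (u, ω) ∂lam) ∂Q')) :
    -- exact law of large numbers
    (∀ Θ : I × Ω → ℝ, @Integrable _ _ _ _ V Θ Q →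
      (∀ᵐ u ∂lam, ∀ᵐ v ∂lam, IndepFun (fun ω => Θ (u, ω)) (fun ω => Θ (v, ω)) Q') →
      ∀ᵐ ω ∂Q', ∫ u, Θ (u, ω) ∂lam = ∫ p, Θ p ∂Q) ∧
    -- corollary for an e.p.i. family of Brownian motions
    (∀ B : I → ℝ → Ω → ℝ,
      (∀ t : ℝ, @Measurable _ _ V _ fun p : I × Ω => B p.1 t p.2) →
      (∀ t : ℝ, 0 ≤ t → @Integrable _ _ _ _ V (fun p : I × Ω => B p.1 t p.2) Q) →
      (∀ u, ∀ t : ℝ, 0 ≤ t → Integrable (fun ω => B u t ω) Q' ∧ ∫ ω, B u t ω ∂Q' = 0) →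
      (∀ t : ℝ, 0 ≤ t → ∀ᵐ u ∂lam, ∀ᵐ v ∂lam,
        IndepFun (fun ω => B u t ω) (fun ω => B v t ω) Q') →
      ∀ t : ℝ, 0 ≤ t → ∀ᵐ ω ∂Q', ∫ u, B u t ω ∂lam = 0) := by
  have hQ : HasFubiniProperty lam Q' Q := hFub
  have hsnd : Measurable[V] Prod.snd := measurable_snd.mono hV le_rfl
  refine ⟨fun Θ hΘ hΘ_indep => hQ.exact_law_ae hsnd hΘ hΘ_indep, ?_⟩
  intro B _ hB_int hB_centred hB_indep t ht
  have hmean : ∫ p, B p.1 t p.2 ∂Q = 0 := by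
    rw [(hFub _ (hB_int t ht)).1]
    simp [(hB_centred _ t ht).2]
  filter_upwards [hQ.exact_law_ae hsnd (hB_int t ht) (hB_indep t ht)] with ω hω
  rw [hω, hmean]

/-- Exact law of large numbers on a Fubini extension: if `Θ` is `Q`-integrable
and essentially pairwise independent, then for `Q'`-a.e. `ω`,
`∫_I Θ(u,ω) λ(du) = ∫ Θ dQ`.  Corollary: for a jointly measurable e.p.i. family of standard
Brownian motions `{B u}` (each `B u t` centred and integrable under `Q'`, each slice
`B · t ·` being `Q`-integrable and e.p.i.), for every `t ≥ 0` and `Q'`-a.e. `ω`,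
`∫_I B^u_t(ω) λ(du) = 0`. -/
theorem stmt14
    {I Ω : Type*} [MeasurableSpace I] [MeasurableSpace Ω]
    (lam : Measure I) (Q' : Measure Ω) [IsProbabilityMeasure lam] [IsProbabilityMeasure Q']
    (V : MeasurableSpace (I × Ω)) (hV : Prod.instMeasurableSpace ≤ V)
    (Q : @Measure (I × Ω) V) (hQprob : @IsProbabilityMeasure _ V Q)
    (hExt : ∀ A : Set (I × Ω), MeasurableSet A → Q A = (lam.prod Q') A)
    (hFub : ∀ g : I × Ω → ℝ, @Integrable _ _ _ _ V g Q →
      (∫ p, g p ∂Q = ∫ u, (∫ ω, g (u, ω) ∂Q') ∂lam) ∧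
      (∫ p, g p ∂Q = ∫ ω, (∫ u, g (u, ω) ∂lam) ∂Q')) :
    -- exact law of large numbers
    (∀ Θ : I × Ω → ℝ, @Integrable _ _ _ _ V Θ Q →
      (∀ᵐ u ∂lam, ∀ᵐ v ∂lam, IndepFun (fun ω => Θ (u, ω)) (fun ω => Θ (v, ω)) Q') →
      ∀ᵐ ω ∂Q', ∫ u, Θ (u, ω) ∂lam = ∫ p, Θ p ∂Q) ∧
    -- corollary for an e.p.i. family of Brownian motions
    (∀ B : I → ℝ → Ω → ℝ,
      (∀ t : ℝ, @Measurable _ _ V _ fun p : I × Ω => B p.1 t p.2) →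
      (∀ t : ℝ, 0 ≤ t → @Integrable _ _ _ _ V (fun p : I × Ω => B p.1 t p.2) Q) →
      (∀ u, ∀ t : ℝ, 0 ≤ t → Integrable (fun ω => B u t ω) Q' ∧ ∫ ω, B u t ω ∂Q' = 0) →
      (∀ t : ℝ, 0 ≤ t → ∀ᵐ u ∂lam, ∀ᵐ v ∂lam,
        IndepFun (fun ω => B u t ω) (fun ω => B v t ω) Q') →
      ∀ t : ℝ, 0 ≤ t → ∀ᵐ ω ∂Q', ∫ u, B u t ω ∂lam = 0) :=
  stmt14_general lam Q' V hV Q hQprob hFub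
end
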